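/- arXiv:1808.09616 — 2 statements merged into one kernel-verified Lean document; each statement's English description precedes it below -/
import Mathlib

section
/- Let v = c + e with c ∈ M^l and ω(e) ≤ t (t the largest integer with 2t+1 ≤ 2^l). If the remainder r of v on division by G has weight ω(r) ≤ t, then e equals r; moreover e = Σ_{τ=1}^{k} x_{I_τ} where each I_τ ⊆ {1,...,m} satisfies |I_τ| < l. -/
set_option synthInstance.maxHeartbeats 1000000
set_option maxHeartbeats 1000000

open MvPolynomial

noncomputable def gI (m : ℕ) (I : Finset (Fin m)) : MvPolynomial (Fin m) (ZMod 2) :=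
  ∏ i ∈ I, (X i - 1)

noncomputable def XI (m : ℕ) (I : Finset (Fin m)) : MvPolynomial (Fin m) (ZMod 2) :=
  ∏ i ∈ I, X i

/-- The ideal (X₁²-1, …, Xₘ²-1). -/
noncomputable def relIdeal (m : ℕ) : Ideal (MvPolynomial (Fin m) (ZMod 2)) :=
  Ideal.span {p | ∃ i : Fin m, p = X i ^ 2 - 1}

/-- The ambient algebra A = F₂[X₁,…,Xₘ]/(X₁²-1,…,Xₘ²-1). -/
abbrev Amb (m : ℕ) := MvPolynomial (Fin m) (ZMod 2) ⧸ relIdeal m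

/-- The ideal M of A generated by the images of the Xᵢ - 1. -/
noncomputable def Mideal (m : ℕ) : Ideal (Amb m) :=
  Ideal.span {a | ∃ i : Fin m, a = Ideal.Quotient.mk (relIdeal m) (X i - 1)}

/-- G = {∏_{i∈I}(Xᵢ-1) : |I| = l}. -/
def Gset (m l : ℕ) : Set (MvPolynomial (Fin m) (ZMod 2)) :=
  {p | ∃ I : Finset (Fin m), I.card = l ∧ p = gI m I}

/-- `IsRemainder m l f r` : r is the remainder of f on division by the Groebner basis
G = {∏_{i∈I}(Xᵢ-1) : |I| = l} (grlex order): f - r ∈ ⟨G⟩ and no term of r is divisible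
by any of the leading terms X_I (|I| = l) of the members of G. -/
def IsRemainder (m l : ℕ) (f r : MvPolynomial (Fin m) (ZMod 2)) : Prop :=
  f - r ∈ Ideal.span (Gset m l) ∧
  ∀ α ∈ r.support, ∀ I : Finset (Fin m), I.card = l → ¬ I ⊆ α.support

namespace St16
variable {m : ℕ}

abbrev W (m : ℕ) := AddMonoidAlgebra (ZMod 2) (Fin m → ZMod 2)

noncomputable def xw (i : Fin m) : W m := AddMonoidAlgebra.single (Pi.single i 1) 1

noncomputable def gw (I : Finset (Fin m)) : W m := ∏ i ∈ I, (xw i - 1)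

def Tset (S : Finset (Fin m)) (l : ℕ) : Set (W m) :=
  {y : W m | ∃ I : Finset (Fin m), I ⊆ S ∧ l ≤ I.card ∧ y = gw I}

lemma z2_add_self (a : ZMod 2) : a + a = 0 := CharTwo.add_self_eq_zero a

lemma pi_add_self (a : Fin m → ZMod 2) : a + a = 0 := by
  funext j; exact z2_add_self _

lemma w_add_self (x : W m) : x + x = 0 := by
  ext f
  show x.coeff f + x.coeff f = 0
  exact z2_add_self _

lemma w_neg (x : W m) : -x = x := by
  rw [neg_eq_iff_add_eq_zero]; exact w_add_self x

lemma xw_sq (i : Fin m) : xw i * xw i = 1 := by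
  rw [xw, AddMonoidAlgebra.single_mul_single, pi_add_self, one_mul]
  rfl

lemma xwm_sq (i : Fin m) : (xw i - 1) * (xw i - 1) = 0 := by
  have h : (xw i - 1) * (xw i - 1) = xw i * xw i + 1 - (xw i + xw i) := by ring
  rw [h, xw_sq, w_add_self (xw i), sub_zero, w_add_self]

lemma xw_mul_xwm (i : Fin m) : xw i * (xw i - 1) = xw i - 1 := by
  have : xw i * (xw i - 1) = xw i * xw i - xw i := by ring
  rw [this, xw_sq, ← w_neg (1 - xw i)]
  ring

lemma gw_insert {i : Fin m} {I : Finset (Fin m)} (h : i ∉ I) :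
    gw (insert i I) = (xw i - 1) * gw I := Finset.prod_insert h

lemma gw_erase {i : Fin m} {I : Finset (Fin m)} (h : i ∈ I) :
    gw I = (xw i - 1) * gw (I.erase i) := by
  rw [← gw_insert (Finset.notMem_erase i I), Finset.insert_erase h]

lemma xwm_mul_gw_mem (i : Fin m) (I : Finset (Fin m)) :
    (xw i - 1) * gw I = 0 ∨ ∃ I' : Finset (Fin m), I'.card = I.card + 1 ∧ (xw i - 1) * gw I = gw I' := by
  by_cases h : i ∈ I
  · left
    rw [gw_erase h, ← mul_assoc, xwm_sq, zero_mul]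
  · right
    exact ⟨insert i I, Finset.card_insert_of_notMem h, (gw_insert h).symm⟩

lemma xw_mul_gw (i : Fin m) (I : Finset (Fin m)) :
    xw i * gw I = gw I ∨ (i ∉ I ∧ xw i * gw I = gw I + gw (insert i I)) := by
  by_cases h : i ∈ I
  · left
    rw [gw_erase h, ← mul_assoc, xw_mul_xwm]
  · right
    refine ⟨h, ?_⟩
    rw [gw_insert h]
    ring

/-- translation embedding -/
def addEmb (a : Fin m → ZMod 2) : (Fin m → ZMod 2) ↪ (Fin m → ZMod 2) :=
  ⟨(a + ·), fun x y h => by simpa using h⟩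

lemma single_one_mul (a : Fin m → ZMod 2) (x : W m) :
    (AddMonoidAlgebra.single a 1 * x).coeff = Finsupp.embDomain (addEmb a) x.coeff := by
  ext y
  rw [AddMonoidAlgebra.coeff_single_mul_apply, one_mul]
  have hy : y = addEmb a (-a + y) := by
    show y = a + (-a + y); abel
  rw [hy, Finsupp.embDomain_apply]
  simp [addEmb]
  show x.coeff (-a + (a + (-a + y))) = x.coeff (-a + y)
  rw [neg_add_cancel_left]

lemma single_one_mul_support (a : Fin m → ZMod 2) (x : W m) :
    (AddMonoidAlgebra.single a 1 * x).coeff.support = x.coeff.support.map (addEmb a) := by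
  rw [single_one_mul, Finsupp.support_embDomain]

lemma single_one_mul_weight (a : Fin m → ZMod 2) (x : W m) :
    (AddMonoidAlgebra.single a 1 * x).coeff.support.card = x.coeff.support.card := by
  rw [single_one_mul_support, Finset.card_map]

/-- elements supported on functions vanishing outside S -/
noncomputable def okSupp (S : Finset (Fin m)) : Submodule (ZMod 2) (W m) where
  carrier := {x | ∀ f ∈ x.coeff.support, ∀ j, j ∉ S → f j = 0}
  add_mem' := by
    intro x y hx hy f hf j hj
    rw [AddMonoidAlgebra.coeff_add] at hf
    rcases Finset.mem_union.mp (Finsupp.support_add hf) with h | h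
    · exact hx f h j hj
    · exact hy f h j hj
  zero_mem' := by intro f hf; simp at hf
  smul_mem' := by
    intro c x hx f hf j hj
    rw [AddMonoidAlgebra.coeff_smul] at hf
    exact hx f (Finsupp.support_smul hf) j hj

lemma one_mem_okSupp (S : Finset (Fin m)) : (1 : W m) ∈ okSupp S := by
  intro f hf j hj
  have : f ∈ (Finsupp.single (0 : Fin m → ZMod 2) (1 : ZMod 2)).support := hf
  rw [Finsupp.support_single_ne_zero _ one_ne_zero] at this
  simp at this
  rw [this]
  rfl

lemma gw_mem_okSupp {I S : Finset (Fin m)} (hIS : I ⊆ S) : gw I ∈ okSupp S := by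
  induction I using Finset.induction generalizing S with
  | empty => exact one_mem_okSupp S
  | @insert i I hi ih =>
    have hIS' : I ⊆ S := fun x hx => hIS (Finset.mem_insert_of_mem hx)
    have hgw : gw I ∈ okSupp S := ih hIS'
    have hins : gw (insert i I) = xw i * gw I - gw I := by
      rw [gw, Finset.prod_insert hi, ← gw]; ring
    rw [hins]
    refine sub_mem ?_ hgw
    intro f hf j hj
    rw [xw, single_one_mul_support] at hf
    rcases Finset.mem_map.mp hf with ⟨g, hg, rfl⟩
    have hgj : g j = 0 := hgw g hg j hj
    have hij : j ≠ i := by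
      intro h; exact hj (h ▸ hIS (Finset.mem_insert_self i I))
    show ((Pi.single i 1 : Fin m → ZMod 2) + g) j = 0
    simp [addEmb, hgj, Pi.single_eq_of_ne hij]

lemma okSupp_spec {S : Finset (Fin m)} {x : W m} (h : x ∈ okSupp S) :
    ∀ f ∈ x.coeff.support, ∀ j, j ∉ S → f j = 0 := h

lemma span_Tset_le_okSupp (S : Finset (Fin m)) (l : ℕ) :
    Submodule.span (ZMod 2) (Tset S l) ≤ okSupp S := by
  rw [Submodule.span_le]
  rintro y ⟨I, hIS, -, rfl⟩
  exact gw_mem_okSupp hIS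

lemma Tset_mono (S : Finset (Fin m)) {l l' : ℕ} (h : l' ≤ l) : Tset S l ⊆ Tset S l' := by
  rintro y ⟨I, hIS, hlc, rfl⟩
  exact ⟨I, hIS, le_trans h hlc, rfl⟩

lemma xw_mul_val {j : Fin m} {B : W m} {s : Finset (Fin m)} (hB : B ∈ okSupp s) (hj : j ∉ s)
    {f : Fin m → ZMod 2} (hf : f ∈ (xw j * B).coeff.support) : f j = 1 := by
  rw [xw, single_one_mul_support] at hf
  rcases Finset.mem_map.mp hf with ⟨g, hg, rfl⟩
  have hgj : g j = 0 := okSupp_spec hB g hg j hj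
  change ((Pi.single j 1 : Fin m → ZMod 2) + g) j = 1
  rw [Pi.add_apply, hgj, add_zero, Pi.single_eq_same]

lemma minw_aux (S : Finset (Fin m)) : ∀ (l : ℕ) (x : W m),
    x ∈ Submodule.span (ZMod 2) (Tset S l) → x ≠ 0 → 2 ^ l ≤ x.coeff.support.card := by
  induction S using Finset.induction with
  | empty =>
    intro l x hx hx0
    match l with
    | 0 => simpa using Finset.card_pos.mpr (Finsupp.support_nonempty_iff.mpr (mt AddMonoidAlgebra.coeff_eq_zero.mp hx0))
    | Nat.succ l' =>
      exfalso
      have hset : Tset (∅ : Finset (Fin m)) (l' + 1) = ∅ := by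
        ext y
        simp only [Tset, Set.mem_setOf_eq, Set.mem_empty_iff_false, iff_false, not_exists]
        rintro I ⟨hI, hc, -⟩
        have : I = ∅ := Finset.subset_empty.mp hI
        simp [this] at hc
      rw [hset, Submodule.span_empty, Submodule.mem_bot] at hx
      exact hx0 hx
  | @insert j s hj ih =>
    intro l x hx hx0
    match l with
    | 0 => simpa using Finset.card_pos.mpr (Finsupp.support_nonempty_iff.mpr (mt AddMonoidAlgebra.coeff_eq_zero.mp hx0))
    | Nat.succ l' =>
      have hdecomp : Submodule.span (ZMod 2) (Tset (insert j s) (l' + 1)) ≤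
          Submodule.span (ZMod 2) (Tset s (l' + 1)) ⊔
          Submodule.map (LinearMap.mulLeft (ZMod 2) (xw j - 1))
            (Submodule.span (ZMod 2) (Tset s l')) := by
        rw [Submodule.span_le]
        rintro y ⟨I, hIS, hlc, rfl⟩
        by_cases hjI : j ∈ I
        · refine Submodule.mem_sup_right (Submodule.mem_map.mpr ⟨gw (I.erase j), ?_, ?_⟩)
          · refine Submodule.subset_span ⟨I.erase j, ?_, ?_, rfl⟩
            · intro x hx
              have := hIS (Finset.mem_of_mem_erase hx)
              rcases Finset.mem_insert.mp this with h | h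
              · exact absurd (h ▸ hx) (Finset.notMem_erase j I)
              · exact h
            · have := Finset.card_erase_of_mem hjI
              omega
          · rw [LinearMap.mulLeft_apply, ← gw_erase hjI]
        · refine Submodule.mem_sup_left (Submodule.subset_span ⟨I, ?_, hlc, rfl⟩)
          intro x hx
          rcases Finset.mem_insert.mp (hIS hx) with h | h
          · exact absurd (h ▸ hx) hjI
          · exact h
      obtain ⟨A, hA, C, hC, hxe⟩ := Submodule.mem_sup.mp (hdecomp hx)
      obtain ⟨B, hB, rfl⟩ := Submodule.mem_map.mp hC
      have hxeq : x = (A - B) + xw j * B := by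
        rw [← hxe, LinearMap.mulLeft_apply]; ring
      have hAs : A ∈ okSupp s := span_Tset_le_okSupp s (l' + 1) hA
      have hBs : B ∈ okSupp s := span_Tset_le_okSupp s l' hB
      have hdisj : Disjoint (A - B).coeff.support (xw j * B).coeff.support := by
        rw [Finset.disjoint_left]
        intro f hf hf2
        have h0 : f j = 0 := okSupp_spec (sub_mem hAs hBs) f hf j hj
        have h1 : f j = 1 := xw_mul_val hBs hj hf2
        rw [h0] at h1; exact one_ne_zero h1.symm
      have hsupp : x.coeff.support.card = (A - B).coeff.support.card + (xw j * B).coeff.support.card := by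
        rw [hxeq, AddMonoidAlgebra.coeff_add, Finsupp.support_add_eq hdisj, Finset.card_union_of_disjoint hdisj]
      have hwB : (xw j * B).coeff.support.card = B.coeff.support.card := single_one_mul_weight _ _
      by_cases hB0 : B = 0
      · have hxA : x = A := by rw [hxeq, hB0]; ring
        have hA0 : A ≠ 0 := hxA ▸ hx0
        rw [hxA]
        exact ih (l' + 1) A hA hA0
      · by_cases hAB : A - B = 0
        · have hABeq : A = B := sub_eq_zero.mp hAB
          have hxB : x = xw j * B := by rw [hxeq, hAB, zero_add]
          have hBspan : B ∈ Submodule.span (ZMod 2) (Tset s (l' + 1)) := hABeq ▸ hA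
          have := ih (l' + 1) B hBspan hB0
          rw [hxB, hwB]
          exact this
        · have hABspan : A - B ∈ Submodule.span (ZMod 2) (Tset s l') :=
            sub_mem (Submodule.span_mono (Tset_mono s (Nat.le_succ l')) hA) hB
          have h1 := ih l' (A - B) hABspan hAB
          have h2 := ih l' B hB hB0
          rw [hsupp, hwB, pow_succ]
          omega

noncomputable def NS (m : ℕ) (l : ℕ) : Submodule (ZMod 2) (W m) :=
  Submodule.span (ZMod 2) (Tset Finset.univ l)

lemma gw_mem_NS {l : ℕ} {I : Finset (Fin m)} (h : l ≤ I.card) : gw I ∈ NS m l :=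
  Submodule.subset_span ⟨I, Finset.subset_univ I, h, rfl⟩

lemma xwm_mul_mem_NS {l : ℕ} (i : Fin m) {x : W m} (hx : x ∈ NS m l) :
    (xw i - 1) * x ∈ NS m (l + 1) := by
  induction hx using Submodule.span_induction with
  | mem y hy =>
    obtain ⟨I, -, hlc, rfl⟩ := hy
    by_cases hiI : i ∈ I
    · rw [gw_erase hiI, ← mul_assoc, xwm_sq, zero_mul]
      exact zero_mem _
    · rw [← gw_insert hiI]
      exact gw_mem_NS (by rw [Finset.card_insert_of_notMem hiI]; omega)
  | zero => rw [mul_zero]; exact zero_mem _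
  | add y z hy hz hy' hz' => rw [mul_add]; exact add_mem hy' hz'
  | smul c y hy hy' => rw [mul_smul_comm]; exact Submodule.smul_mem _ c hy'

lemma xw_mul_mem_NS {l : ℕ} (i : Fin m) {x : W m} (hx : x ∈ NS m l) :
    xw i * x ∈ NS m l := by
  induction hx using Submodule.span_induction with
  | mem y hy =>
    obtain ⟨I, -, hlc, rfl⟩ := hy
    by_cases hiI : i ∈ I
    · rw [gw_erase hiI, ← mul_assoc, xw_mul_xwm, ← gw_erase hiI]
      exact gw_mem_NS hlc
    · have : xw i * gw I = gw I + gw (insert i I) := by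
        rw [gw_insert hiI]; ring
      rw [this]
      exact add_mem (gw_mem_NS hlc)
        (gw_mem_NS (by rw [Finset.card_insert_of_notMem hiI]; omega))
  | zero => rw [mul_zero]; exact zero_mem _
  | add y z hy hz hy' hz' => rw [mul_add]; exact add_mem hy' hz'
  | smul c y hy hy' => rw [mul_smul_comm]; exact Submodule.smul_mem _ c hy'

lemma prod_xw_eq_single (s : Finset (Fin m)) :
    ∏ i ∈ s, xw i = AddMonoidAlgebra.single (∑ i ∈ s, Pi.single i 1) 1 := by
  induction s using Finset.induction with
  | empty => simp; rfl
  | @insert i s hi ih =>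
    rw [Finset.prod_insert hi, ih, xw, AddMonoidAlgebra.single_mul_single, one_mul,
      Finset.sum_insert hi]

lemma single_eq_prod_xw (a : Fin m → ZMod 2) :
    AddMonoidAlgebra.single a (1 : ZMod 2) = ∏ i ∈ Finset.univ.filter (fun i => a i ≠ 0), xw i := by
  rw [prod_xw_eq_single]
  congr 1
  funext j
  rw [Finset.sum_apply]
  have : ∀ i ∈ Finset.univ.filter (fun i => a i ≠ 0), (Pi.single i 1 : Fin m → ZMod 2) j
      = if j = i then (1 : ZMod 2) else 0 := fun i _ => Pi.single_apply i 1 j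
  rw [Finset.sum_congr rfl this, Finset.sum_ite_eq]
  by_cases h : a j = 0
  · simp [h]
  · have h1 : a j = 1 := by
      have hb : ∀ b : ZMod 2, b ≠ 0 → b = 1 := by decide
      exact hb _ h
    simp [h, h1]

lemma single_mul_mem_NS {l : ℕ} (a : Fin m → ZMod 2) {x : W m} (hx : x ∈ NS m l) :
    AddMonoidAlgebra.single a 1 * x ∈ NS m l := by
  rw [single_eq_prod_xw]
  induction Finset.univ.filter (fun i => a i ≠ 0) using Finset.induction with
  | empty => simpa using hx
  | @insert i s hi ih =>
    rw [Finset.prod_insert hi, mul_assoc]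
    exact xw_mul_mem_NS i ih

lemma mul_mem_NS {l : ℕ} (y : W m) {x : W m} (hx : x ∈ NS m l) : y * x ∈ NS m l := by
  induction y using AddMonoidAlgebra.induction with
  | zero => rw [zero_mul]; exact zero_mem _
  | single_add a b f haf hb ih =>
    have hsingle : (AddMonoidAlgebra.single a b : W m) * x
        = b • (AddMonoidAlgebra.single a 1 * x) := by
      rw [← smul_mul_assoc, AddMonoidAlgebra.smul_single, smul_eq_mul, mul_one]
    rw [add_mul, hsingle]
    exact add_mem (Submodule.smul_mem _ b (single_mul_mem_NS a hx)) ih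

/-- NS as an ideal -/
noncomputable def NI (m l : ℕ) : Ideal (W m) where
  carrier := NS m l
  add_mem' := add_mem
  zero_mem' := zero_mem _
  smul_mem' := fun c x hx => by rw [smul_eq_mul]; exact mul_mem_NS c hx

lemma mem_NI_iff {l : ℕ} {x : W m} : x ∈ NI m l ↔ x ∈ NS m l := Iff.rfl

lemma NS_zero_top (x : W m) : x ∈ NS m 0 := by
  have h1 : (1 : W m) ∈ NS m 0 := by
    have : (1 : W m) = gw (∅ : Finset (Fin m)) := by rw [gw, Finset.prod_empty]
    rw [this]
    exact gw_mem_NS (by simp)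
  have := mul_mem_NS x h1
  rwa [mul_one] at this

lemma span_xwm_pow_le (l : ℕ) :
    (Ideal.span {y : W m | ∃ i : Fin m, y = xw i - 1}) ^ l ≤ NI m l := by
  induction l with
  | zero =>
    rw [pow_zero, Ideal.one_eq_top]
    exact fun x _ => NS_zero_top x
  | succ l ih =>
    rw [pow_succ]
    rw [Ideal.mul_le]
    intro r hr s hs
    induction hs using Submodule.span_induction with
    | mem y hy =>
      obtain ⟨i, rfl⟩ := hy
      rw [mul_comm]
      exact xwm_mul_mem_NS i (ih hr)
    | zero => rw [mul_zero]; exact zero_mem _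
    | add y z hy hz hy' hz' => rw [mul_add]; exact add_mem hy' hz'
    | smul c y hy hy' =>
      rw [smul_eq_mul, ← mul_assoc, mul_comm r c, mul_assoc]
      exact mul_mem_NS c hy'

def baru (α : Fin m →₀ ℕ) : Fin m → ZMod 2 := fun i => ((α i : ℕ) : ZMod 2)

noncomputable def phi (m : ℕ) : MvPolynomial (Fin m) (ZMod 2) →ₐ[ZMod 2] W m :=
  aeval (fun i => xw i)

lemma prod_single_w {s : Finset (Fin m)} (f : Fin m → (Fin m → ZMod 2)) :
    ∏ i ∈ s, (AddMonoidAlgebra.single (f i) 1 : W m)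
      = AddMonoidAlgebra.single (∑ i ∈ s, f i) 1 := by
  induction s using Finset.induction with
  | empty => simp; rfl
  | @insert i s hi ih =>
    rw [Finset.prod_insert hi, ih, AddMonoidAlgebra.single_mul_single, one_mul,
      Finset.sum_insert hi]

lemma phi_monomial (β : Fin m →₀ ℕ) (b : ZMod 2) :
    phi m (monomial β b) = AddMonoidAlgebra.single (baru β) b := by
  rw [phi, aeval_monomial]
  have hpow : ∀ i k, (xw i : W m) ^ k = AddMonoidAlgebra.single (Pi.single i ((k : ℕ) : ZMod 2)) 1 := by
    intro i k
    rw [xw, AddMonoidAlgebra.single_pow, one_pow]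
    congr 1
    funext j
    by_cases h : j = i
    · subst h; simp
    · simp [Pi.single_eq_of_ne h]
  have hprod : (β.prod fun i k => (xw i : W m) ^ k)
      = AddMonoidAlgebra.single (baru β) 1 := by
    rw [Finsupp.prod]
    have : ∀ i ∈ β.support, (xw i : W m) ^ (β i)
        = AddMonoidAlgebra.single (Pi.single i ((β i : ℕ) : ZMod 2)) 1 := fun i _ => hpow i (β i)
    rw [Finset.prod_congr rfl this, prod_single_w]
    congr 1
    funext j
    rw [Finset.sum_apply]
    have h2 : ∀ i ∈ β.support, (Pi.single i ((β i : ℕ) : ZMod 2) : Fin m → ZMod 2) j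
        = if j = i then ((β i : ℕ) : ZMod 2) else 0 := fun i _ => Pi.single_apply _ _ _
    rw [Finset.sum_congr rfl h2]
    have h3 : ∀ i ∈ β.support, (if j = i then ((β i : ℕ) : ZMod 2) else 0)
        = if j = i then ((β j : ℕ) : ZMod 2) else 0 := by
      intro i _
      by_cases h : j = i
      · subst h; rfl
      · simp [h]
    rw [Finset.sum_congr rfl h3, Finset.sum_ite_eq]
    by_cases h : j ∈ β.support
    · simp [h, baru]
    · rw [Finsupp.notMem_support_iff] at h
      simp [h, baru]
  rw [hprod]
  rw [Algebra.algebraMap_eq_smul_one]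
  rw [smul_mul_assoc, one_mul, AddMonoidAlgebra.smul_single, smul_eq_mul, mul_one]

lemma phi_eq_sum (p : MvPolynomial (Fin m) (ZMod 2)) :
    phi m p = ∑ β ∈ p.support, AddMonoidAlgebra.single (baru β) (coeff β p) := by
  conv_lhs => rw [as_sum p]
  rw [map_sum]
  exact Finset.sum_congr rfl fun β _ => phi_monomial β (coeff β p)

lemma phi_support (p : MvPolynomial (Fin m) (ZMod 2)) :
    (phi m p).coeff.support ⊆ p.support.image baru := by
  rw [phi_eq_sum, AddMonoidAlgebra.coeff_sum]
  refine (Finsupp.support_finset_sum).trans ?_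
  intro f hf
  rcases Finset.mem_biUnion.mp hf with ⟨β, hβ, hfβ⟩
  have := Finsupp.support_single_subset hfβ
  rw [Finset.mem_singleton] at this
  exact Finset.mem_image.mpr ⟨β, hβ, this.symm⟩

lemma phi_weight (p : MvPolynomial (Fin m) (ZMod 2)) :
    (phi m p).coeff.support.card ≤ p.support.card :=
  le_trans (Finset.card_le_card (phi_support p)) (Finset.card_image_le)

lemma phi_apply (p : MvPolynomial (Fin m) (ZMod 2)) (f : Fin m → ZMod 2) :
    (phi m p).coeff f = ∑ β ∈ p.support, (if baru β = f then coeff β p else 0) := by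
  rw [phi_eq_sum, AddMonoidAlgebra.coeff_sum, Finset.sum_apply']
  exact Finset.sum_congr rfl fun β _ => Finsupp.single_apply

lemma baru_inj {α β : Fin m →₀ ℕ} (hα : ∀ i, α i ≤ 1) (hβ : ∀ i, β i ≤ 1)
    (h : baru α = baru β) : α = β := by
  ext i
  have hi := congrFun h i
  have key : ∀ a b : ℕ, a ≤ 1 → b ≤ 1 → ((a : ZMod 2) = (b : ZMod 2)) → a = b := by
    intro a b ha hb hab
    interval_cases a <;> interval_cases b <;> simp_all
  exact key _ _ (hα i) (hβ i) hi

lemma phi_apply_ml {p : MvPolynomial (Fin m) (ZMod 2)} (hp : ∀ β ∈ p.support, ∀ i, β i ≤ 1)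
    {α : Fin m →₀ ℕ} (hα : ∀ i, α i ≤ 1) :
    (phi m p).coeff (baru α) = coeff α p := by
  rw [phi_apply]
  have : ∀ β ∈ p.support, (if baru β = baru α then coeff β p else 0)
      = if β = α then coeff β p else 0 := by
    intro β hβ
    congr 1
    apply propext
    constructor
    · exact fun h => baru_inj (hp β hβ) hα h
    · intro h; rw [h]
  rw [Finset.sum_congr rfl this, Finset.sum_ite_eq' p.support α (fun β => coeff β p)]
  by_cases h : α ∈ p.support
  · simp [h]
  · rw [if_neg h, eq_comm]
    exact notMem_support_iff.mp h

lemma phi_inj_ml {p q : MvPolynomial (Fin m) (ZMod 2)}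
    (hp : ∀ β ∈ p.support, ∀ i, β i ≤ 1) (hq : ∀ β ∈ q.support, ∀ i, β i ≤ 1)
    (h : phi m p = phi m q) : p = q := by
  ext α
  by_cases hα : ∀ i, α i ≤ 1
  · rw [← phi_apply_ml hp hα, ← phi_apply_ml hq hα, h]
  · push_neg at hα
    obtain ⟨i, hi⟩ := hα
    have h1 : α ∉ p.support := fun hmem => absurd (hp α hmem i) (by omega)
    have h2 : α ∉ q.support := fun hmem => absurd (hq α hmem i) (by omega)
    rw [notMem_support_iff.mp h1, notMem_support_iff.mp h2]

/-- indicator finsupp of a finset -/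
noncomputable def indF (I : Finset (Fin m)) : Fin m →₀ ℕ := ∑ i ∈ I, Finsupp.single i 1

lemma indF_apply (I : Finset (Fin m)) (j : Fin m) : indF I j = if j ∈ I then 1 else 0 := by
  rw [indF, Finset.sum_apply']
  have : ∀ i ∈ I, (Finsupp.single i 1 : Fin m →₀ ℕ) j = if j = i then 1 else 0 :=
    fun i _ => Finsupp.single_apply.trans
      (if_congr ⟨fun h => h.symm, fun h => h.symm⟩ rfl rfl)
  rw [Finset.sum_congr rfl this, Finset.sum_ite_eq]

lemma XI_eq_monomial (I : Finset (Fin m)) : XI m I = monomial (indF I) 1 := by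
  rw [XI, indF]
  induction I using Finset.induction with
  | empty => simp [monomial_zero']
  | @insert i I hi ih =>
    rw [Finset.prod_insert hi, ih, Finset.sum_insert hi, X, monomial_mul, one_mul]

lemma gI_eq_sum (I : Finset (Fin m)) : gI m I = ∑ J ∈ I.powerset, XI m J := by
  have hneg : ∀ i : Fin m, (X i - 1 : MvPolynomial (Fin m) (ZMod 2)) = X i + 1 := by
    intro i
    rw [sub_eq_add_neg]
    congr 1
    rw [neg_eq_iff_add_eq_zero, ← C_1, ← C_add]
    norm_num
    rfl
  rw [gI, Finset.prod_congr rfl fun i _ => hneg i]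
  have := Finset.prod_add (fun i : Fin m => (X i : MvPolynomial (Fin m) (ZMod 2))) (fun _ => 1) I
  rw [this]
  exact Finset.sum_congr rfl fun J hJ => by rw [Finset.prod_const_one, mul_one, XI]

lemma gI_support (I : Finset (Fin m)) : (gI m I).support ⊆ I.powerset.image indF := by
  rw [gI_eq_sum]
  intro α hα
  have := MvPolynomial.support_sum hα
  rcases Finset.mem_biUnion.mp this with ⟨J, hJ, hαJ⟩
  rw [XI_eq_monomial] at hαJ
  have := support_monomial_subset hαJ
  rw [Finset.mem_singleton] at this
  exact Finset.mem_image.mpr ⟨J, hJ, this.symm⟩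

lemma indF_support {I : Finset (Fin m)} : (indF I).support = I := by
  ext j
  rw [Finsupp.mem_support_iff, indF_apply]
  by_cases h : j ∈ I <;> simp [h]

lemma gI_ml (I : Finset (Fin m)) : ∀ α ∈ (gI m I).support, (∀ i, α i ≤ 1) ∧ α.support ⊆ I := by
  intro α hα
  rcases Finset.mem_image.mp (gI_support I hα) with ⟨J, hJ, rfl⟩
  constructor
  · intro i; rw [indF_apply]; split <;> omega
  · rw [indF_support]; exact Finset.mem_powerset.mp hJ

/-- the key "reduced + in the ideal ⟹ zero" lemma -/
lemma reduced_mem_Gideal_eq_zero {l : ℕ} {p : MvPolynomial (Fin m) (ZMod 2)}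
    (hp : p ∈ Ideal.span (Gset m l)) (hred : ∀ α ∈ p.support, α.support.card < l) :
    p = 0 := by
  by_contra hp0
  have hne : p.support.Nonempty := by
    rwa [MvPolynomial.support_nonempty]
  obtain ⟨α, hα, hmax⟩ := Finset.exists_max_image p.support (fun β => β.support.card) hne
  have hψg : ∀ q ∈ Gset m l,
      (aeval (fun i => if i ∈ α.support then X i else 1) :
        MvPolynomial (Fin m) (ZMod 2) →ₐ[ZMod 2] MvPolynomial (Fin m) (ZMod 2)) q = 0 := by
    rintro q ⟨I, hIcard, rfl⟩
    have hnotsub : ¬ I ⊆ α.support := by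
      intro hsub
      have h1 := Finset.card_le_card hsub
      have h2 := hred α hα
      omega
    obtain ⟨i0, hi0I, hi0T⟩ := Finset.not_subset.mp hnotsub
    rw [gI, map_prod]
    refine Finset.prod_eq_zero hi0I ?_
    rw [map_sub, map_one, aeval_X, if_neg hi0T, sub_self]
  set ψ : MvPolynomial (Fin m) (ZMod 2) →ₐ[ZMod 2] MvPolynomial (Fin m) (ZMod 2) :=
    aeval (fun i => if i ∈ α.support then X i else 1) with hψ
  have hψp : ψ p = 0 := by
    have hker : Ideal.span (Gset m l) ≤ RingHom.ker ψ.toRingHom := by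
      rw [Ideal.span_le]
      intro q hq
      exact hψg q hq
    exact hker hp
  have hψmon : ∀ (β : Fin m →₀ ℕ) (b : ZMod 2),
      ψ (monomial β b) = monomial (β.filter (· ∈ α.support)) b := by
    intro β b
    rw [hψ, aeval_monomial, monomial_eq]
    congr 1
    rw [Finsupp.prod, Finsupp.prod, Finsupp.support_filter]
    rw [Finset.prod_filter]
    refine Finset.prod_congr rfl ?_
    intro i hi
    by_cases h : i ∈ α.support
    · rw [if_pos h, if_pos h, Finsupp.filter_apply_pos _ _ h]
    · rw [if_neg h, if_neg h, one_pow]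
  have hcoeff : coeff α (ψ p) = coeff α p := by
    conv_lhs => rw [as_sum p, map_sum]
    rw [Finset.sum_congr rfl (fun β _ => hψmon β (coeff β p)), coeff_sum]
    have hite : ∀ β ∈ p.support,
        coeff α (monomial (β.filter (· ∈ α.support)) (coeff β p))
          = if β = α then coeff β p else 0 := by
      intro β hβ
      rw [coeff_monomial]
      congr 1
      apply propext
      constructor
      · intro hfil
        have hsub : α.support ⊆ β.support := by
          intro j hjα
          have h1 : (β.filter (· ∈ α.support)) j = β j :=
            Finsupp.filter_apply_pos _ _ hjα
          rw [hfil] at h1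
          rw [Finsupp.mem_support_iff] at hjα ⊢
          rw [← h1]
          exact hjα
        have hcard : β.support.card ≤ α.support.card := hmax β hβ
        have hsupeq : α.support = β.support := Finset.eq_of_subset_of_card_le hsub hcard
        ext j
        by_cases hjT : j ∈ α.support
        · rw [← hfil]
          exact (Finsupp.filter_apply_pos _ _ hjT).symm
        · have h1 : β j = 0 := by
            rw [← Finsupp.notMem_support_iff, ← hsupeq]
            exact hjT
          have h2 : α j = 0 := by
            rw [← Finsupp.notMem_support_iff]
            exact hjT
          rw [h1, h2]
      · rintro rfl
        ext j
        by_cases hjT : j ∈ β.support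
        · exact Finsupp.filter_apply_pos _ _ hjT
        · rw [Finsupp.filter_apply_neg _ _ hjT, eq_comm, ← Finsupp.notMem_support_iff]
          exact hjT
    rw [Finset.sum_congr rfl hite, Finset.sum_ite_eq' p.support α (fun β => coeff β p), if_pos hα]
  rw [hψp] at hcoeff
  simp only [coeff_zero] at hcoeff
  exact (Finsupp.mem_support_iff.mp hα) hcoeff.symm


lemma phi_gI (I : Finset (Fin m)) : phi m (gI m I) = gw I := by
  rw [gI, gw, map_prod]
  exact Finset.prod_congr rfl fun i _ => by rw [map_sub, map_one, phi, aeval_X]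

lemma phi_relIdeal {p : MvPolynomial (Fin m) (ZMod 2)} (hp : p ∈ relIdeal m) :
    phi m p = 0 := by
  have hker : relIdeal m ≤ RingHom.ker (phi m).toRingHom := by
    rw [relIdeal, Ideal.span_le]
    rintro q ⟨i, rfl⟩
    have : phi m (X i ^ 2 - 1) = xw i ^ 2 - 1 := by
      rw [map_sub, map_one, map_pow, phi, aeval_X]
    show phi m _ = 0
    rw [this, pow_two, xw_sq, sub_self]
  exact hker hp

end St16

open St16 in
/-- if v = c + e with c ∈ Mˡ, ω(e) ≤ t, and the remainder r of v mod G
has weight ω(r) ≤ t, then e = r, and every monomial of e involves fewer than l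
variables (e = Σ x_{I_τ} with |I_τ| < l). -/
theorem stmt16 (m l t : ℕ) (hl1 : 1 ≤ l) (hlm : l ≤ m)
    (ht : 2 * t + 1 ≤ 2 ^ l ∧ ∀ s : ℕ, 2 * s + 1 ≤ 2 ^ l → s ≤ t)
    (c e v : MvPolynomial (Fin m) (ZMod 2))
    (hc : ∀ α ∈ c.support, ∀ i : Fin m, α i ≤ 1)
    (he : ∀ α ∈ e.support, ∀ i : Fin m, α i ≤ 1)
    (hcM : Ideal.Quotient.mk (relIdeal m) c ∈ Mideal m ^ l)
    (hv : v = c + e) (hew : e.support.card ≤ t)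
    (r : MvPolynomial (Fin m) (ZMod 2)) (hr : IsRemainder m l v r)
    (hrw : r.support.card ≤ t) :
    e = r ∧ ∀ α ∈ e.support, α.support.card < l := by
  classical
  -- Step 1 : phi c ∈ NS m l
  set J : Ideal (MvPolynomial (Fin m) (ZMod 2)) :=
    Ideal.span {p | ∃ i : Fin m, p = X i - 1} with hJ
  have hMmap : Mideal m = Ideal.map (Ideal.Quotient.mk (relIdeal m)) J := by
    rw [Mideal, hJ, Ideal.map_span]
    congr 1
    ext a
    constructor
    · rintro ⟨i, rfl⟩
      exact ⟨X i - 1, ⟨i, rfl⟩, rfl⟩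
    · rintro ⟨p, ⟨i, rfl⟩, rfl⟩
      exact ⟨i, rfl⟩
  rw [hMmap, ← Ideal.map_pow] at hcM
  obtain ⟨x, hxJ, hmkx⟩ := (Ideal.mem_map_iff_of_surjective _
    Ideal.Quotient.mk_surjective).mp hcM
  have hphix : phi m x ∈ NS m l := by
    have h1 : phi m x ∈ Ideal.map (phi m) (J ^ l) := Ideal.mem_map_of_mem _ hxJ
    have h2 : Ideal.map (phi m) (J ^ l) ≤ NI m l := by
      rw [Ideal.map_pow]
      refine le_trans (Ideal.pow_right_mono ?_ l) (span_xwm_pow_le l)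
      rw [hJ, Ideal.map_span, Ideal.span_le]
      rintro y ⟨p, ⟨i, rfl⟩, rfl⟩
      refine Ideal.subset_span ⟨i, ?_⟩
      rw [map_sub, map_one, phi, aeval_X]
    exact h2 h1
  have hphic : phi m c ∈ NS m l := by
    have hdiff : x - c ∈ relIdeal m := Ideal.Quotient.eq.mp hmkx
    have h0 : phi m (x - c) = 0 := phi_relIdeal hdiff
    rw [map_sub, sub_eq_zero] at h0
    rw [← h0]
    exact hphix
  -- Step 2 : phi (v - r) ∈ NS m l
  have hGmap : ∀ p ∈ Ideal.span (Gset m l), phi m p ∈ NS m l := by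
    intro p hp
    have h1 : phi m p ∈ Ideal.map (phi m) (Ideal.span (Gset m l)) :=
      Ideal.mem_map_of_mem _ hp
    have h2 : Ideal.map (phi m) (Ideal.span (Gset m l)) ≤ NI m l := by
      rw [Ideal.map_span, Ideal.span_le]
      rintro y ⟨q, ⟨I, hIcard, rfl⟩, rfl⟩
      rw [phi_gI]
      exact gw_mem_NS (le_of_eq hIcard.symm)
    exact h2 h1
  have hvr : phi m (v - r) ∈ NS m l := hGmap _ hr.1
  -- Step 3 : phi e - phi r ∈ NS m l
  have hd : phi m e - phi m r ∈ NS m l := by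
    have heq : phi m e - phi m r = phi m (v - r) - phi m c := by
      rw [hv, map_sub, map_add]
      ring
    rw [heq]
    exact sub_mem hvr hphic
  -- Step 4 : weight bound forces phi e = phi r
  have hphier : phi m e = phi m r := by
    rw [← sub_eq_zero]
    by_contra hne
    have hmw := minw_aux Finset.univ l _ hd hne
    have hcard : (phi m e - phi m r).coeff.support.card ≤ 2 * t := by
      rw [AddMonoidAlgebra.coeff_sub]
      have h1 := Finset.card_le_card (Finsupp.support_sub
        (f := (phi m e).coeff) (g := (phi m r).coeff))
      have h2 := Finset.card_union_le (phi m e).coeff.support (phi m r).coeff.support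
      have h3 := phi_weight e
      have h4 := phi_weight r
      omega
    have := ht.1
    omega
  -- Step 5 : conclusion 2
  have concl2 : ∀ α ∈ e.support, α.support.card < l := by
    intro α hα
    by_contra hge
    push_neg at hge
    obtain ⟨I, hIsub, hIcard⟩ := Finset.exists_subset_card_eq hge
    have heml : ∀ i, α i ≤ 1 := he α hα
    have h1 : (phi m e).coeff (baru α) = coeff α e := phi_apply_ml he heml
    have h2 : (phi m r).coeff (baru α) ≠ 0 := by
      rw [← hphier, h1]
      exact mem_support_iff.mp hα
    rw [phi_apply] at h2
    obtain ⟨β, hβ, hne⟩ := Finset.exists_ne_zero_of_sum_ne_zero h2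
    have hbar : baru β = baru α := by
      by_contra h
      rw [if_neg h] at hne
      exact hne rfl
    have hsub : α.support ⊆ β.support := by
      intro j hj
      have hαj : α j = 1 :=
        le_antisymm (heml j) (Nat.one_le_iff_ne_zero.mpr (Finsupp.mem_support_iff.mp hj))
      have hbj : baru β j = 1 := by
        rw [hbar]
        simp [baru, hαj]
      rw [Finsupp.mem_support_iff]
      intro h0
      rw [baru] at hbj
      simp only [h0, Nat.cast_zero] at hbj
      exact one_ne_zero hbj.symm
    exact hr.2 β hβ I hIcard (hIsub.trans hsub)
  -- Step 6 : r has small supports too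
  have hrsmall : ∀ α ∈ r.support, α.support.card < l := by
    intro α hα
    by_contra hge
    push_neg at hge
    obtain ⟨I, hIsub, hIcard⟩ := Finset.exists_subset_card_eq hge
    exact hr.2 α hα I hIcard hIsub
  -- Step 7 : c ∈ Ideal.span (Gset m l)
  have hcG : c ∈ Ideal.span (Gset m l) := by
    obtain ⟨n, f, g, hsum⟩ := Submodule.mem_span_set'.mp hphic
    have hsel : ∀ i : Fin n, ∃ I : Finset (Fin m), l ≤ I.card ∧ (g i : W m) = gw I := by
      intro i
      obtain ⟨I, -, hcard, heq⟩ := (g i).2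
      exact ⟨I, hcard, heq⟩
    choose Isel hIcard hIeq using hsel
    set c' : MvPolynomial (Fin m) (ZMod 2) := ∑ i : Fin n, f i • gI m (Isel i) with hc'
    have hphic' : phi m c' = phi m c := by
      rw [hc', map_sum]
      rw [← hsum]
      refine Finset.sum_congr rfl fun i _ => ?_
      rw [map_smul, phi_gI, hIeq]
    have hc'ml : ∀ α ∈ c'.support, ∀ i : Fin m, α i ≤ 1 := by
      intro α hα i
      rw [hc'] at hα
      have := MvPolynomial.support_sum hα
      rcases Finset.mem_biUnion.mp this with ⟨k, -, hk⟩
      have hk2 : α ∈ (gI m (Isel k)).support := MvPolynomial.support_smul hk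
      exact (gI_ml (Isel k) α hk2).1 i
    have hcc' : c = c' := phi_inj_ml hc hc'ml (hphic'.symm)
    rw [hcc', hc']
    refine Submodule.sum_mem _ fun i _ => ?_
    rw [smul_eq_C_mul]
    refine Ideal.mul_mem_left _ _ ?_
    obtain ⟨I', hI'sub, hI'card⟩ := Finset.exists_subset_card_eq (hIcard i)
    have hsplit : gI m (Isel i) = gI m (Isel i \ I') * gI m I' := by
      rw [gI, gI, gI, ← Finset.prod_sdiff hI'sub]
    rw [hsplit]
    exact Ideal.mul_mem_left _ _ (Ideal.subset_span ⟨I', hI'card, rfl⟩)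
  -- Step 8 : e - r ∈ Ideal.span (Gset m l) and is reduced, hence zero
  have herG : e - r ∈ Ideal.span (Gset m l) := by
    have heq : e - r = (v - r) - c := by
      rw [hv]
      ring
    rw [heq]
    exact sub_mem hr.1 hcG
  have herred : ∀ α ∈ (e - r).support, α.support.card < l := by
    intro α hα
    rcases Finset.mem_union.mp (MvPolynomial.support_sub (Fin m) e r hα) with h | h
    · exact concl2 α h
    · exact hrsmall α h
  have her0 : e - r = 0 := reduced_mem_Gideal_eq_zero herG herred
  exact ⟨sub_eq_zero.mp her0, concl2⟩
end

section
/- Let v = c + e with c ∈ M^l and e = x_{I_1} + ... + x_{I_k}, k ≤ t, where the I_τ ⊆ {1,...,m} are pairwise distinct and at least one satisfies |I_τ| ≥ l. Then the remainder of v on division by G has Hamming weight strictly greater than t. -/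
set_option synthInstance.maxHeartbeats 1000000
set_option maxHeartbeats 1000000

open MvPolynomial

/-!
Substituting `X_i ↦ X_i + 1` (which in characteristic 2 sends `X_i - 1` to `X_i`) turns `M` into
the ideal of the variables, the members of `G` into squarefree monomials of degree `l` and the
relations `X_i² - 1` into `X_i²`. As `v - r ∈ ⟨G⟩` and `c ∈ Mˡ`, the class of `e - r` lies in `Mˡ`:
after the substitution, its coefficients at squarefree monomials of degree `< l` vanish. Passing
back from the basis `∏_{i∈J} (x_i + 1)` to the basis `x_S` is the upper sum
`S ↦ ∑_{J ⊇ S} g J`, and splitting the subsets along one variable shows that such an upper sum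
of a nonzero `g` vanishing below degree `l` has at least `2ˡ` nonzero values: this is the minimum
distance of the Reed–Muller code. The class of `e - r` is nonzero, since its coefficient at `x_I`
with `I ∈ T`, `l ≤ |I|` is `1`: every monomial of `r` involves fewer than `l` variables. Hence
`2ˡ ≤ |T| + wt r ≤ t + wt r`, while `2t < 2ˡ`.
-/

open Finset

section UpperSum

variable {ι M : Type*} [DecidableEq ι] [AddCommMonoid M]

def upperSum (U : Finset ι) (g : Finset ι → M) (S : Finset ι) : M :=
  ∑ J ∈ U.powerset, if S ⊆ J then g J else 0

lemma upperSum_insert {a : ι} {U S : Finset ι} (ha : a ∉ U) (hS : S ⊆ U) (g : Finset ι → M) :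
    upperSum (insert a U) g S = upperSum U (fun J => g J + g (insert a J)) S := by
  have haS : a ∉ S := fun h => ha (hS h)
  simp only [upperSum, sum_powerset_insert ha, subset_insert_iff_of_notMem haS,
    ← sum_add_distrib]
  refine sum_congr rfl fun J _ => ?_
  split_ifs <;> simp

lemma upperSum_insert_insert {a : ι} {U S : Finset ι} (ha : a ∉ U) (hS : S ⊆ U)
    (g : Finset ι → M) :
    upperSum (insert a U) g (insert a S) = upperSum U (fun J => g (insert a J)) S := by
  have haS : a ∉ S := fun h => ha (hS h)
  have hout : ∀ J ∈ U.powerset, ¬ insert a S ⊆ J := fun J hJ h =>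
    ha (mem_powerset.1 hJ (h (mem_insert_self a S)))
  simp only [upperSum, sum_powerset_insert ha, insert_subset_insert_iff haS]
  rw [sum_eq_zero fun J hJ => if_neg (hout J hJ), zero_add]

lemma card_upperSum_ne_zero_insert [DecidableEq M] {a : ι} {U : Finset ι} (ha : a ∉ U)
    (g : Finset ι → M) :
    #{S ∈ (insert a U).powerset | upperSum (insert a U) g S ≠ 0} =
      #{S ∈ U.powerset | upperSum U (fun J => g J + g (insert a J)) S ≠ 0} +
        #{S ∈ U.powerset | upperSum U (fun J => g (insert a J)) S ≠ 0} := by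
  simp only [card_filter, sum_powerset_insert ha]
  congr 1 <;> refine sum_congr rfl fun S hS => ?_
  · rw [upperSum_insert ha (mem_powerset.1 hS)]
  · rw [upperSum_insert_insert ha (mem_powerset.1 hS)]

theorem two_pow_le_card_upperSum_ne_zero [DecidableEq M] (U : Finset ι) (l : ℕ)
    (g : Finset ι → M) (hlow : ∀ J ⊆ U, #J < l → g J = 0) (hne : ∃ J ⊆ U, g J ≠ 0) :
    2 ^ l ≤ #{S ∈ U.powerset | upperSum U g S ≠ 0} := by
  induction U using Finset.induction_on generalizing l g with
  | empty =>
    obtain ⟨J, hJ, hgJ⟩ := hne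
    rw [subset_empty.1 hJ] at hgJ
    have hl : l = 0 := by
      by_contra hl
      exact hgJ (hlow ∅ subset_rfl (by rw [card_empty]; omega))
    have hmem : ∅ ∈ {S ∈ (∅ : Finset ι).powerset | upperSum ∅ g S ≠ 0} := by
      simpa [upperSum] using hgJ
    simpa [hl] using card_pos.2 ⟨_, hmem⟩
  | @insert a U ha ih =>
    rw [card_upperSum_ne_zero_insert ha]
    set g₁ : Finset ι → M := fun J => g (insert a J)
    set g₀ : Finset ι → M := fun J => g J + g₁ J
    have hlow_g : ∀ J ⊆ U, #J < l → g J = 0 := fun J hJ =>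
      hlow J (hJ.trans (subset_insert a U))
    have hlow₁ : ∀ J ⊆ U, #J < l - 1 → g₁ J = 0 := fun J hJ hJl =>
      hlow _ (insert_subset_insert a hJ) (by have := card_insert_le a J; omega)
    by_cases hne₁ : ∃ J ⊆ U, g₁ J ≠ 0
    · by_cases hne₀ : ∃ J ⊆ U, g₀ J ≠ 0
      · have hlow₀ : ∀ J ⊆ U, #J < l - 1 → g₀ J = 0 := fun J hJ hJl => by
          simp only [g₀, hlow_g J hJ (by omega), hlow₁ J hJ hJl, add_zero]
        have h₀ := ih (l - 1) g₀ hlow₀ hne₀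
        have h₁ := ih (l - 1) g₁ hlow₁ hne₁
        have hpow : 2 ^ l ≤ 2 ^ (l - 1) + 2 ^ (l - 1) := by
          rcases l with _ | l
          · simp
          · rw [Nat.add_sub_cancel, pow_succ]; omega
        omega
      · push Not at hne₀
        have hlow₁' : ∀ J ⊆ U, #J < l → g₁ J = 0 := fun J hJ hJl => by
          simpa [g₀, hlow_g J hJ hJl] using hne₀ J hJ
        have := ih l g₁ hlow₁' hne₁
        omega
    · push Not at hne₁
      have hne₀ : ∃ J ⊆ U, g₀ J ≠ 0 := by
        obtain ⟨J, hJ, hgJ⟩ := hne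
        by_cases haJ : a ∈ J
        · refine absurd ?_ hgJ
          rw [← insert_erase haJ]
          exact hne₁ _ (subset_insert_iff.1 hJ)
        · refine ⟨J, (subset_insert_iff_of_notMem haJ).1 hJ, ?_⟩
          simpa [g₀, hne₁ J ((subset_insert_iff_of_notMem haJ).1 hJ)] using hgJ
      have hlow₀ : ∀ J ⊆ U, #J < l → g₀ J = 0 := fun J hJ hJl => by
        simp only [g₀, hlow_g J hJ hJl, hne₁ J hJ, add_zero]
      have := ih l g₀ hlow₀ hne₀
      omega

end UpperSum

section SquarefreeMonomials

variable {σ R : Type*} [CommRing R]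

noncomputable def sqfreeExp (J : Finset σ) : σ →₀ ℕ := ∑ i ∈ J, Finsupp.single i 1

lemma sqfreeExp_apply [DecidableEq σ] (J : Finset σ) (i : σ) :
    sqfreeExp J i = if i ∈ J then 1 else 0 := by
  simp [sqfreeExp, Finsupp.finsetSum_apply, Finsupp.single_apply]

lemma support_sqfreeExp (J : Finset σ) : (sqfreeExp J).support = J := by
  classical
  ext i
  simp [sqfreeExp_apply]

lemma sqfreeExp_injective : Function.Injective (sqfreeExp (σ := σ)) := fun J K h => by
  rw [← support_sqfreeExp J, h, support_sqfreeExp]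

lemma degree_sqfreeExp (J : Finset σ) : (sqfreeExp J).degree = #J := by
  simp [sqfreeExp, map_sum, Finsupp.degree_single]

lemma monomial_sqfreeExp (J : Finset σ) :
    monomial (sqfreeExp J) (1 : R) = ∏ i ∈ J, X i := by
  simp only [sqfreeExp, monomial_sum_one, X]

def oddPart (α : σ →₀ ℕ) : Finset σ := {i ∈ α.support | Odd (α i)}

lemma oddPart_subset_support (α : σ →₀ ℕ) : oddPart α ⊆ α.support := filter_subset _ _

lemma oddPart_sqfreeExp [DecidableEq σ] (J : Finset σ) : oddPart (sqfreeExp J) = J := by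
  rw [oddPart, support_sqfreeExp]
  exact filter_true_of_mem fun i hi => by simp [sqfreeExp_apply, hi]

/-- The coefficient of `x_S` in the image of `p` in `R[X]/(X_i ^ 2 - 1)`, written in the basis
of squarefree monomials. -/
noncomputable def reducedCoeff [DecidableEq σ] (S : Finset σ) (p : MvPolynomial σ R) : R :=
  ∑ α ∈ p.support with oddPart α = S, coeff α p

lemma reducedCoeff_eq_coeff [DecidableEq σ] {S : Finset σ} {p : MvPolynomial σ R}
    (h : ∀ α ∈ p.support, oddPart α = S → α = sqfreeExp S) :
    reducedCoeff S p = coeff (sqfreeExp S) p := by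
  refine sum_eq_single _
    (fun α hα hne => absurd (h α (mem_filter.1 hα).1 (mem_filter.1 hα).2) hne) fun hS => ?_
  rw [mem_filter, oddPart_sqfreeExp, mem_support_iff] at hS
  simpa using hS

lemma support_sum_monomial_sqfreeExp_subset [DecidableEq σ] (T : Finset (Finset σ)) :
    (∑ I ∈ T, monomial (sqfreeExp I) (1 : R)).support ⊆ T.image sqfreeExp := by
  intro α hα
  obtain ⟨I, hI, hαI⟩ := mem_biUnion.1 (support_sum hα)
  exact mem_image.2 ⟨I, hI, (mem_singleton.1 (support_monomial_subset hαI)).symm⟩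

lemma reducedCoeff_sum_monomial_sqfreeExp_sub [DecidableEq σ]
    {T : Finset (Finset σ)} {S : Finset σ} (hS : S ∈ T) {r : MvPolynomial σ R}
    (hr : ∀ α ∈ r.support, #α.support < #S) :
    reducedCoeff S (∑ I ∈ T, monomial (sqfreeExp I) 1 - r) = 1 := by
  have hrS : coeff (sqfreeExp S) r = 0 :=
    notMem_support_iff.1 fun h => by simpa [support_sqfreeExp] using hr _ h
  rw [reducedCoeff_eq_coeff, coeff_sub, hrS, sub_zero, coeff_sum]
  · simp [coeff_monomial, sqfreeExp_injective.eq_iff, hS]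
  intro α hα hαS
  rcases mem_union.1 (support_sub σ _ _ hα) with hα | hα
  · obtain ⟨I, -, rfl⟩ := mem_image.1 (support_sum_monomial_sqfreeExp_subset T hα)
    rw [← hαS, oddPart_sqfreeExp]
  · have := (card_le_card (oddPart_subset_support α)).trans_lt (hr α hα)
    rw [hαS] at this
    exact absurd this (lt_irrefl _)

lemma coeff_sqfreeExp_prod_X_add_one [DecidableEq σ] (J K : Finset σ) :
    coeff (sqfreeExp J) (∏ i ∈ K, (X i + 1) : MvPolynomial σ R) = if J ⊆ K then 1 else 0 := by
  simp only [prod_add, prod_const_one, mul_one, ← monomial_sqfreeExp, coeff_sum, coeff_monomial,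
    sqfreeExp_injective.eq_iff, sum_ite_eq', mem_powerset]

end SquarefreeMonomials

section ShiftVars

variable {σ R : Type*} [CommRing R]

noncomputable def shiftVars : MvPolynomial σ R →ₐ[R] MvPolynomial σ R := aeval fun i => X i + 1

variable (σ R) in
noncomputable abbrev idealOfSquares : Ideal (MvPolynomial σ R) := .span (.range fun i => X i ^ 2)

lemma shiftVars_X_sub_one (i : σ) : shiftVars (X i - 1 : MvPolynomial σ R) = X i := by
  simp [shiftVars]

lemma map_shiftVars_span_X_sub_one :
    Ideal.map shiftVars (Ideal.span (Set.range fun i => (X i - 1 : MvPolynomial σ R))) =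
      idealOfVars σ R := by
  rw [Ideal.map_span, ← Set.range_comp]
  simp [Function.comp_def, shiftVars_X_sub_one]

lemma coeff_sqfreeExp_eq_zero_of_mem_idealOfSquares {p : MvPolynomial σ R}
    (hp : p ∈ idealOfSquares σ R) (J : Finset σ) : coeff (sqfreeExp J) p = 0 := by
  classical
  have hspan : (Set.range fun i => (X i ^ 2 : MvPolynomial σ R)) =
      (monomial · 1) '' Set.range fun i => Finsupp.single i 2 := by
    rw [← Set.range_comp]
    simp [Function.comp_def, X_pow_eq_monomial]
  rw [idealOfSquares, hspan, mem_ideal_span_monomial_image] at hp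
  by_contra hJ
  obtain ⟨_, ⟨i, rfl⟩, hle⟩ := hp _ (mem_support_iff.2 hJ)
  have := hle i
  simp only [Finsupp.single_eq_same, sqfreeExp_apply] at this
  split_ifs at this <;> omega

lemma coeff_sqfreeExp_eq_zero_of_mem_sup {l : ℕ} {p : MvPolynomial σ R}
    (hp : p ∈ idealOfVars σ R ^ l ⊔ idealOfSquares σ R) {J : Finset σ} (hJ : #J < l) :
    coeff (sqfreeExp J) p = 0 := by
  obtain ⟨a, ha, b, hb, rfl⟩ := Submodule.mem_sup.1 hp
  rw [coeff_add, (mem_pow_idealOfVars_iff' l a).1 ha _ (by rwa [degree_sqfreeExp]),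
    coeff_sqfreeExp_eq_zero_of_mem_idealOfSquares hb, add_zero]

variable [CharP R 2]

lemma shiftVars_X_sq_sub_one (i : σ) : shiftVars (X i ^ 2 - 1 : MvPolynomial σ R) = X i ^ 2 := by
  simp [shiftVars, CharTwo.add_sq]

lemma map_shiftVars_span_X_sq_sub_one :
    Ideal.map shiftVars (Ideal.span (Set.range fun i => (X i ^ 2 - 1 : MvPolynomial σ R))) =
      idealOfSquares σ R := by
  rw [Ideal.map_span, ← Set.range_comp]
  simp [Function.comp_def, shiftVars_X_sq_sub_one]

lemma mk_shiftVars_monomial [DecidableEq σ] (α : σ →₀ ℕ) :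
    Ideal.Quotient.mk (idealOfSquares σ R) (shiftVars (monomial α 1)) =
      Ideal.Quotient.mk (idealOfSquares σ R) (∏ i ∈ oddPart α, (X i + 1)) := by
  have hsq : ∀ i, Ideal.Quotient.mk (idealOfSquares σ R) (X i + 1) ^ 2 = 1 := fun i => by
    rw [← map_pow, CharTwo.add_sq, one_pow, map_add, map_one,
      Ideal.Quotient.eq_zero_iff_mem.2 (Ideal.subset_span (Set.mem_range_self i)), zero_add]
  rw [shiftVars, aeval_monomial, map_one, one_mul, Finsupp.prod, map_prod, map_prod, oddPart,
    prod_filter]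
  refine prod_congr rfl fun i _ => ?_
  rw [map_pow, pow_eq_pow_mod _ (hsq i)]
  rcases Nat.even_or_odd (α i) with h | h
  · rw [Nat.even_iff.1 h, if_neg (Nat.not_odd_iff_even.2 h), pow_zero]
  · rw [Nat.odd_iff.1 h, if_pos h, pow_one]

lemma coeff_sqfreeExp_shiftVars_monomial [DecidableEq σ] (α : σ →₀ ℕ) (a : R) (J : Finset σ) :
    coeff (sqfreeExp J) (shiftVars (monomial α a)) = if J ⊆ oddPart α then a else 0 := by
  have hdiff := Ideal.Quotient.eq.1 (mk_shiftVars_monomial (R := R) α)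
  rw [← mul_one a, ← smul_eq_mul, ← smul_monomial, map_smul, coeff_smul,
    ← sub_add_cancel (shiftVars (monomial α 1)) (∏ i ∈ oddPart α, (X i + 1)), coeff_add,
    coeff_sqfreeExp_eq_zero_of_mem_idealOfSquares hdiff, zero_add,
    coeff_sqfreeExp_prod_X_add_one]
  simp

lemma coeff_sqfreeExp_shiftVars [DecidableEq σ] (p : MvPolynomial σ R) (J : Finset σ) :
    coeff (sqfreeExp J) (shiftVars p) =
      ∑ α ∈ p.support, if J ⊆ oddPart α then coeff α p else 0 := by
  conv_lhs => rw [p.as_sum]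
  simp only [map_sum, coeff_sum, coeff_sqfreeExp_shiftVars_monomial]

lemma upperSum_ite_subset [Fintype σ] [DecidableEq σ] (S T : Finset σ) (a : R) :
    upperSum univ (fun J => if J ⊆ T then a else 0) S = if T = S then a else 0 := by
  have hIcc : ({J ∈ (univ : Finset σ).powerset | S ⊆ J ∧ J ⊆ T}) = Icc S T := by
    ext J
    simp
  rw [upperSum, ← sum_filter, sum_ite, sum_const_zero, add_zero, filter_filter, hIcc,
    sum_const, nsmul_eq_mul]
  by_cases hST : S ⊆ T
  · rw [card_Icc_finset hST, Nat.cast_pow, Nat.cast_ofNat, CharTwo.two_eq_zero]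
    by_cases hTS : T = S
    · simp [hTS]
    · have : #S < #T := card_lt_card (Finset.ssubset_iff_subset_ne.2 ⟨hST, Ne.symm hTS⟩)
      rw [zero_pow (by omega), zero_mul, if_neg hTS]
  · rw [Icc_eq_empty hST, card_empty, Nat.cast_zero,
      zero_mul, if_neg (by rintro rfl; exact hST subset_rfl)]

lemma upperSum_coeff_shiftVars [Fintype σ] [DecidableEq σ] (p : MvPolynomial σ R)
    (S : Finset σ) :
    upperSum univ (fun J => coeff (sqfreeExp J) (shiftVars p)) S = reducedCoeff S p := by
  simp only [upperSum, coeff_sqfreeExp_shiftVars, ite_sum_zero]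
  rw [sum_comm, reducedCoeff, sum_filter]
  exact sum_congr rfl fun α _ => upperSum_ite_subset S (oddPart α) (coeff α p)

theorem two_pow_le_card_support [Fintype σ] [DecidableEq σ] {l : ℕ} {p : MvPolynomial σ R}
    (hp : shiftVars p ∈ idealOfVars σ R ^ l ⊔ idealOfSquares σ R) {S : Finset σ}
    (hS : reducedCoeff S p ≠ 0) : 2 ^ l ≤ #p.support := by
  classical
  set g : Finset σ → R := fun J => coeff (sqfreeExp J) (shiftVars p)
  have hne : ∃ J ⊆ univ, g J ≠ 0 := by
    by_contra! h
    refine hS ?_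
    rw [← upperSum_coeff_shiftVars, upperSum]
    exact sum_eq_zero fun J _ => by simp only [g] at h; simp [h J (subset_univ J)]
  calc 2 ^ l ≤ #{S ∈ univ.powerset | upperSum univ g S ≠ 0} :=
        two_pow_le_card_upperSum_ne_zero _ l g
          (fun J _ hJ => coeff_sqfreeExp_eq_zero_of_mem_sup hp hJ) hne
    _ ≤ #(p.support.image oddPart) := card_le_card fun S hS => by
        rw [mem_filter, upperSum_coeff_shiftVars] at hS
        obtain ⟨α, hα, -⟩ := exists_ne_zero_of_sum_ne_zero hS.2
        exact mem_image.2 ⟨α, (mem_filter.1 hα).1, (mem_filter.1 hα).2⟩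
    _ ≤ #p.support := card_image_le

end ShiftVars

section GroebnerRemainder

variable {m l : ℕ}

lemma relIdeal_eq_span :
    relIdeal m =
      Ideal.span (Set.range fun i => (X i ^ 2 - 1 : MvPolynomial (Fin m) (ZMod 2))) := by
  simp only [relIdeal, Set.range, eq_comm]

lemma mem_sup_relIdeal_of_mk_mem_Mideal_pow {c : MvPolynomial (Fin m) (ZMod 2)}
    (hc : Ideal.Quotient.mk (relIdeal m) c ∈ Mideal m ^ l) :
    c ∈ Ideal.span (Set.range fun i => X i - 1) ^ l ⊔ relIdeal m := by
  have hM : Mideal m =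
      Ideal.map (Ideal.Quotient.mk (relIdeal m)) (Ideal.span (Set.range fun i => X i - 1)) := by
    rw [Mideal, Ideal.map_span, ← Set.range_comp]
    simp only [Set.range, Function.comp_def, eq_comm]
  rwa [hM, ← Ideal.map_pow, Ideal.mem_quotient_iff_mem_sup] at hc

lemma span_Gset_le :
    Ideal.span (Gset m l) ≤ Ideal.span (Set.range fun i => X i - 1) ^ l := by
  rw [Ideal.span_le]
  rintro _ ⟨I, rfl, rfl⟩
  rw [gI, ← prod_const]
  exact Ideal.prod_mem_prod fun i _ => Ideal.subset_span (Set.mem_range_self i)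

lemma IsRemainder.card_support_lt {f r : MvPolynomial (Fin m) (ZMod 2)}
    (hr : IsRemainder m l f r) :
    ∀ α ∈ r.support, #α.support < l := fun α hα => by
  by_contra! h
  obtain ⟨I, hI, hIl⟩ := exists_subset_card_eq h
  exact hr.2 α hα I hIl hI

end GroebnerRemainder

theorem stmt17_general (m l t : ℕ)
    (ht : 2 * t + 1 ≤ 2 ^ l ∧ ∀ s : ℕ, 2 * s + 1 ≤ 2 ^ l → s ≤ t)
    (c e v : MvPolynomial (Fin m) (ZMod 2))
    (hcM : Ideal.Quotient.mk (relIdeal m) c ∈ Mideal m ^ l)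
    (T : Finset (Finset (Fin m))) (he : e = ∑ I ∈ T, XI m I)
    (hk : T.card ≤ t) (hbig : ∃ I ∈ T, l ≤ I.card)
    (hv : v = c + e)
    (r : MvPolynomial (Fin m) (ZMod 2)) (hr : IsRemainder m l v r) :
    t < r.support.card := by
  obtain ⟨I₀, hI₀T, hI₀l⟩ := hbig
  have he' : e = ∑ I ∈ T, monomial (sqfreeExp I) 1 := by simp only [he, XI, monomial_sqfreeExp]
  have hmem : e - r ∈ Ideal.span (Set.range fun i => X i - 1) ^ l ⊔ relIdeal m := by
    rw [show e - r = (v - r) - c by rw [hv]; ring]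
    exact sub_mem (Ideal.mem_sup_left (span_Gset_le hr.1))
      (mem_sup_relIdeal_of_mk_mem_Mideal_pow hcM)
  have hshift : shiftVars (e - r) ∈ idealOfVars (Fin m) (ZMod 2) ^ l ⊔ idealOfSquares _ _ := by
    have := Ideal.mem_map_of_mem shiftVars hmem
    rwa [Ideal.map_sup, Ideal.map_pow, map_shiftVars_span_X_sub_one, relIdeal_eq_span,
      map_shiftVars_span_X_sq_sub_one] at this
  have hred : reducedCoeff I₀ (e - r) = 1 := by
    rw [he']
    exact reducedCoeff_sum_monomial_sqfreeExp_sub hI₀T fun α hα =>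
      (hr.card_support_lt α hα).trans_le hI₀l
  have hweight := two_pow_le_card_support hshift (hred ▸ one_ne_zero)
  have hsupp : #(e - r).support ≤ #T + #r.support := calc
    #(e - r).support ≤ #e.support + #r.support :=
      (card_le_card (support_sub (Fin m) e r)).trans (card_union_le _ _)
    _ ≤ #T + #r.support := by
      rw [he']
      gcongr
      exact (card_le_card (support_sum_monomial_sqfreeExp_subset T)).trans card_image_le
  omega

/-- if v = c + e with c ∈ Mˡ and e = x_{I₁} + ⋯ + x_{I_k}, the I_τ
pairwise distinct, k ≤ t, and some |I_τ| ≥ l, then the remainder of v mod G has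
weight strictly greater than t. -/
theorem stmt17 (m l t : ℕ) (hl1 : 1 ≤ l) (hlm : l ≤ m)
    (ht : 2 * t + 1 ≤ 2 ^ l ∧ ∀ s : ℕ, 2 * s + 1 ≤ 2 ^ l → s ≤ t)
    (c e v : MvPolynomial (Fin m) (ZMod 2))
    (hc : ∀ α ∈ c.support, ∀ i : Fin m, α i ≤ 1)
    (hcM : Ideal.Quotient.mk (relIdeal m) c ∈ Mideal m ^ l)
    (T : Finset (Finset (Fin m))) (he : e = ∑ I ∈ T, XI m I)
    (hk : T.card ≤ t) (hbig : ∃ I ∈ T, l ≤ I.card)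
    (hv : v = c + e)
    (r : MvPolynomial (Fin m) (ZMod 2)) (hr : IsRemainder m l v r) :
    t < r.support.card :=
  stmt17_general m l t ht c e v hcM T he hk hbig hv r hr
end
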